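/- arXiv:1004.5466 — 5 statements merged into one kernel-verified Lean document; each statement's English description precedes it below -/
import Mathlib

section
/- Φ_15(−x) = C(x)² − 15x·D(x)², where C(x) = x⁴ + 8x³ + 13x² + 8x + 1 and D(x) = x³ + 3x² + 3x + 1. -/
open Polynomial

lemma cyclotomic_fifteen : cyclotomic 15 ℤ =
    X ^ 8 - X ^ 7 + X ^ 5 - X ^ 4 + X ^ 3 - X + 1 := by
  have h := prod_cyclotomic_eq_X_pow_sub_one (by norm_num : 0 < 15) ℤ
  have hd : Nat.divisors 15 = {1, 3, 5, 15} := by decide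
  rw [hd, Finset.prod_insert (by decide), Finset.prod_insert (by decide),
    Finset.prod_insert (by decide), Finset.prod_singleton, cyclotomic_one,
    @cyclotomic_prime ℤ _ 3 ⟨by norm_num⟩, @cyclotomic_prime ℤ _ 5 ⟨by norm_num⟩] at h
  set Q : ℤ[X] := X ^ 7 + X ^ 6 + X ^ 5 - X ^ 2 - X - 1 with hQ
  have h1 : Q * cyclotomic 15 ℤ = X ^ 15 - 1 := by
    rw [← h]; simp only [Finset.sum_range_succ, Finset.sum_range_zero, hQ]; ring
  have h2 : Q * (X ^ 8 - X ^ 7 + X ^ 5 - X ^ 4 + X ^ 3 - X + 1) = (X:ℤ[X]) ^ 15 - 1 := by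
    rw [hQ]; ring
  have hne : Q ≠ 0 := fun hc => by
    have := congrArg (fun p => p.coeff 7) hc
    simp [hQ, coeff_one, coeff_X] at this
  exact mul_left_cancel₀ hne (h1.trans h2.symm)

/-- Aurifeuillian identity for `n = 15`:
`Φ_15(−x) = (x⁴ + 8x³ + 13x² + 8x + 1)² − 15x·(x³ + 3x² + 3x + 1)²`. -/
theorem cyclotomic_fifteen_aurifeuille :
    (cyclotomic 15 ℤ).comp (-X) =
      (X ^ 4 + 8 * X ^ 3 + 13 * X ^ 2 + 8 * X + 1) ^ 2 -
        15 * X * (X ^ 3 + 3 * X ^ 2 + 3 * X + 1) ^ 2 := by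
  rw [cyclotomic_fifteen]
  simp only [sub_comp, add_comp, pow_comp, X_comp, one_comp]
  ring
end

section
/- Φ_15(x) = (x⁴ + 2x³ + 3x² + 2x + 1)² − 5x(x³ + x² + x + 1)² as polynomials with integer coefficients. -/
open Polynomial

/-- Schinzel/Beeger-type identity:
`Φ_15(x) = (x⁴ + 2x³ + 3x² + 2x + 1)² − 5x(x³ + x² + x + 1)²`. -/
theorem cyclotomic_fifteen_schinzel :
    cyclotomic 15 ℤ =
      (X ^ 4 + 2 * X ^ 3 + 3 * X ^ 2 + 2 * X + 1) ^ 2 -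
        5 * X * (X ^ 3 + X ^ 2 + X + 1) ^ 2 := by
  have h := prod_cyclotomic_eq_X_pow_sub_one (by norm_num : 0 < 15) ℤ
  have hd : Nat.divisors 15 = {1, 3, 5, 15} := by decide
  rw [hd] at h
  rw [Finset.prod_insert (by decide), Finset.prod_insert (by decide),
    Finset.prod_insert (by decide), Finset.prod_singleton, cyclotomic_one] at h
  have h3 : Fact (Nat.Prime 3) := ⟨by norm_num⟩
  have h5 : Fact (Nat.Prime 5) := ⟨by norm_num⟩
  rw [cyclotomic_prime ℤ 3, cyclotomic_prime ℤ 5] at h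
  have key : (X - 1 : ℤ[X]) * ((∑ i ∈ Finset.range 3, X ^ i) *
      ((∑ i ∈ Finset.range 5, X ^ i) *
        ((X ^ 4 + 2 * X ^ 3 + 3 * X ^ 2 + 2 * X + 1) ^ 2 -
          5 * X * (X ^ 3 + X ^ 2 + X + 1) ^ 2))) = X ^ 15 - 1 := by
    simp only [Finset.prod_range_succ, Finset.sum_range_succ, Finset.sum_range_zero]
    ring
  have := h.trans key.symm
  have hne : (X - 1 : ℤ[X]) * ((∑ i ∈ Finset.range 3, X ^ i) *
      (∑ i ∈ Finset.range 5, X ^ i)) ≠ 0 := by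
    intro hc
    have := congrArg (Polynomial.eval 2) hc
    simp [Finset.sum_range_succ] at this
  have h2 : (X - 1 : ℤ[X]) * ((∑ i ∈ Finset.range 3, X ^ i) *
      (∑ i ∈ Finset.range 5, X ^ i)) * cyclotomic 15 ℤ =
    (X - 1 : ℤ[X]) * ((∑ i ∈ Finset.range 3, X ^ i) *
      (∑ i ∈ Finset.range 5, X ^ i)) *
      ((X ^ 4 + 2 * X ^ 3 + 3 * X ^ 2 + 2 * X + 1) ^ 2 -
        5 * X * (X ^ 3 + X ^ 2 + X + 1) ^ 2) := by
    linear_combination this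
  exact mul_left_cancel₀ hne h2
end

section
/- Let n > 0 be an integer, ζ a primitive n-th root of unity, and k an integer. Let g = gcd(k, n). Then the Ramanujan sum ∑_{0 < j ≤ n, gcd(j,n)=1} ζ^{jk} equals μ(n/g)·φ(n)/φ(n/g), where μ is the Möbius function and φ is Euler's totient function. -/
open Finset

open Finset

lemma fiber_card_eq {G H : Type*} [Group G] [Fintype G] [Group H] [Fintype H] [DecidableEq H]
    (f : G →* H) (hf : Function.Surjective f) (b : H) :
    #{a : G | f a = b} = #{a : G | f a = (1 : H)} := by
  obtain ⟨a₀, ha₀⟩ := hf b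
  apply Finset.card_bij' (fun a _ => a₀⁻¹ * a) (fun a _ => a₀ * a)
  · intro a ha
    simp only [mem_filter, mem_univ, true_and] at ha ⊢
    simp [ha, ha₀]
  · intro a ha
    simp only [mem_filter, mem_univ, true_and] at ha ⊢
    simp [ha, ha₀]
  · intro a _; group
  · intro a _; group

lemma card_mul_card_fiber {G H : Type*} [Group G] [Fintype G] [Group H] [Fintype H]
    [DecidableEq H] (f : G →* H) (hf : Function.Surjective f) :
    Fintype.card H * #{a : G | f a = (1 : H)} = Fintype.card G := by
  have h1 : (Finset.univ : Finset G).card = ∑ b : H, #{a : G | f a = b} :=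
    Finset.card_eq_sum_card_fiberwise fun x _ => Finset.mem_univ (f x)
  rw [Fintype.card, Fintype.card, h1]
  rw [Finset.sum_congr rfl fun b _ => fiber_card_eq f hf b, Finset.sum_const, smul_eq_mul]

lemma sum_comp_surj {G H : Type*} [Group G] [Fintype G] [Group H] [Fintype H] [DecidableEq H]
    (f : G →* H) (hf : Function.Surjective f) (F : H → ℂ) :
    (Fintype.card H : ℂ) * ∑ u : G, F (f u) = (Fintype.card G : ℂ) * ∑ v : H, F v := by
  rw [Finset.sum_comp F f, Finset.image_univ_of_surjective hf]
  rw [Finset.mul_sum, Finset.mul_sum]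
  apply Finset.sum_congr rfl
  intro b _
  rw [fiber_card_eq f hf b, nsmul_eq_mul]
  rw [← card_mul_card_fiber f hf]
  push_cast
  ring

open Finset

lemma zpow_congr_of_zmod_eq {m : ℕ} (hm : 0 < m) {ξ : ℂ} (hξ : IsPrimitiveRoot ξ m) {a b : ℤ}
    (h : (a : ZMod m) = (b : ZMod m)) : ξ ^ a = ξ ^ b := by
  have hne : ξ ≠ 0 := hξ.ne_zero hm.ne'
  obtain ⟨t, ht⟩ := ((ZMod.intCast_eq_intCast_iff a b m).mp h).dvd
  have hab : a = b + (m : ℤ) * (-t) := by linarith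
  rw [hab, zpow_add₀ hne, zpow_mul, zpow_natCast, hξ.pow_eq_one, one_zpow, mul_one]

lemma sum_coprime_pow_eq_moebius (m : ℕ) (hm : 0 < m) (ξ : ℂ) (hξ : IsPrimitiveRoot ξ m) :
    ∑ a ∈ (Finset.range m).filter (fun a => Nat.gcd a m = 1), ξ ^ a =
      (ArithmeticFunction.moebius m : ℂ) := by
  set f : ℕ → ℂ := fun e => ∑ a ∈ (Finset.range e).filter (fun a => Nat.gcd a e = 1),
    ξ ^ (m / e * a) with hf
  set g : ℕ → ℂ := fun d => if d = 1 then 1 else 0 with hgdef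
  have key : ∀ d > 0, d ∈ {d : ℕ | d ∣ m} → (∑ e ∈ d.divisors, f e) = g d := by
    intro d hd hdvd
    simp only [Set.mem_setOf_eq] at hdvd
    have hprim : IsPrimitiveRoot (ξ ^ (m / d)) d := hξ.pow hm (Nat.div_mul_cancel hdvd).symm
    have hgeom : ∑ j ∈ Finset.range d, (ξ ^ (m / d)) ^ j = g d := by
      rcases eq_or_lt_of_le (show 1 ≤ d from hd) with h1 | h1
      · simp [hgdef, ← h1]
      · rw [hgdef]
        simp only [if_neg (by omega : d ≠ 1)]
        exact hprim.geom_sum_eq_zero h1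
    have hpart : ∑ j ∈ Finset.range d, (ξ ^ (m / d)) ^ j =
        ∑ c ∈ d.divisors, ∑ j ∈ (Finset.range d).filter (fun j => Nat.gcd d j = c),
          (ξ ^ (m / d)) ^ j :=
      (Finset.sum_fiberwise_of_maps_to
        (fun j _ => Nat.mem_divisors.mpr ⟨Nat.gcd_dvd_left d j, hd.ne'⟩) _).symm
    rw [← hgeom, hpart, ← Nat.sum_div_divisors d f]
    apply Finset.sum_congr rfl
    intro c hc
    obtain ⟨hcd, _⟩ := Nat.mem_divisors.mp hc
    have hc0 : 0 < c := Nat.pos_of_dvd_of_pos hcd hd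
    obtain ⟨e, he⟩ := hcd
    have he0 : 0 < e := by
      rcases Nat.eq_zero_or_pos e with rfl | h
      · rw [mul_zero] at he; omega
      · exact h
    have hdc : d / c = e := by rw [he]; exact Nat.mul_div_cancel_left e hc0
    obtain ⟨t, htm⟩ := hdvd
    have hmd : m / d = t := by rw [htm]; exact Nat.mul_div_cancel_left t hd
    have hme : m / e = c * t := by
      rw [htm, he]
      rw [show c * e * t = e * (c * t) by ring]
      exact Nat.mul_div_cancel_left _ he0
    rw [hdc, hf]
    apply Finset.sum_nbij' (i := fun a => c * a) (j := fun j => j / c)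
    · intro a ha
      simp only [mem_filter, mem_range] at ha ⊢
      refine ⟨?_, ?_⟩
      · calc c * a < c * e := (Nat.mul_lt_mul_left hc0).mpr ha.1
          _ = d := he.symm
      · rw [he, Nat.gcd_mul_left, Nat.gcd_comm, ha.2, mul_one]
    · intro j hj
      simp only [mem_filter, mem_range] at hj ⊢
      have hcg : 0 < Nat.gcd d j := by rw [hj.2]; exact hc0
      have hco := Nat.coprime_div_gcd_div_gcd hcg
      rw [hj.2, hdc] at hco
      refine ⟨?_, ?_⟩
      · rw [Nat.div_lt_iff_lt_mul hc0]
        calc j < d := hj.1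
          _ = e * c := by rw [he]; ring
      · rw [Nat.gcd_comm]; exact hco
    · intro a ha
      exact Nat.mul_div_cancel_left a hc0
    · intro j hj
      simp only [mem_filter, mem_range] at hj
      have hcj : c ∣ j := hj.2 ▸ Nat.gcd_dvd_right d j
      exact Nat.mul_div_cancel' hcj
    · intro a ha
      rw [← pow_mul]
      congr 1
      rw [hmd, hme]; ring
  have inv := (ArithmeticFunction.sum_eq_iff_sum_smul_moebius_eq_on {d : ℕ | d ∣ m}
    (fun a b hab hbm => hab.trans hbm)).mp key m hm (Set.mem_setOf_eq ▸ dvd_refl m)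
  have hfm : f m = ∑ a ∈ (Finset.range m).filter (fun a => Nat.gcd a m = 1), ξ ^ a := by
    rw [hf]
    simp [Nat.div_self hm]
  rw [← hfm, ← inv]
  rw [Finset.sum_eq_single_of_mem (m, 1)
    (Nat.mem_divisorsAntidiagonal.mpr ⟨mul_one m, hm.ne'⟩)]
  · simp [hgdef]
  · intro x hx hxne
    obtain ⟨hx1, hx2⟩ := Nat.mem_divisorsAntidiagonal.mp hx
    have : x.2 ≠ 1 := by
      intro h2
      apply hxne
      have : x.1 = m := by rw [← hx1, h2, mul_one]
      exact Prod.ext this h2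
    simp [hgdef, this]

/-- Ramanujan's sum: for `n > 0`, `ζ` a primitive `n`-th root of unity and `k` an
integer with `g = gcd(k, n)`,
`∑_{0 < j ≤ n, gcd(j,n)=1} ζ^{jk} = μ(n/g)·φ(n)/φ(n/g)`. -/
theorem ramanujan_sum_eval (n : ℕ) (hn : 0 < n) (ζ : ℂ) (hζ : IsPrimitiveRoot ζ n)
    (k : ℤ) :
    ∑ j ∈ (Finset.Icc 1 n).filter (fun j => Nat.gcd j n = 1), ζ ^ ((j : ℤ) * k) =
      (ArithmeticFunction.moebius (n / Int.gcd k n) : ℂ) * (Nat.totient n) /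
        (Nat.totient (n / Int.gcd k n)) := by
  haveI : NeZero n := ⟨hn.ne'⟩
  set g : ℕ := Int.gcd k n with hgdef
  have hg0 : 0 < g := Int.gcd_pos_iff.mpr (Or.inr (by exact_mod_cast hn.ne'))
  have hgdvdn : g ∣ n := by
    have h2 : ((Int.gcd k n : ℕ) : ℤ) ∣ (n : ℤ) := Int.gcd_dvd_right _ _
    exact_mod_cast h2
  set m : ℕ := n / g with hmdef
  have hm0 : 0 < m := Nat.div_pos (Nat.le_of_dvd hn hgdvdn) hg0
  haveI : NeZero m := ⟨hm0.ne'⟩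
  have hmdvd : m ∣ n := Nat.div_dvd_of_dvd hgdvdn
  have hnm : n = g * m := (Nat.mul_div_cancel' hgdvdn).symm
  set k' : ℤ := k / (g : ℤ) with hk'def
  have hk : k = (g : ℤ) * k' := (Int.mul_ediv_cancel' (Int.gcd_dvd_left k (n : ℤ))).symm
  have hcop : Int.gcd k' m = 1 := by
    have h2 := Int.gcd_div_gcd_div_gcd (i := k) (j := (n : ℤ)) (by exact_mod_cast hg0)
    rwa [show ((n : ℤ) / (Int.gcd k n : ℤ)) = (m : ℤ) by rw [hmdef, hgdef, Int.natCast_div]] at h2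
  set ζm : ℂ := ζ ^ g with hζmdef
  have hζm : IsPrimitiveRoot ζm m := hζ.pow hn hnm
  have hterm : ∀ j : ℕ, ζ ^ ((j : ℤ) * k) = ζm ^ ((j : ℤ) * k') := by
    intro j
    have h1 : (j : ℤ) * k = (g : ℤ) * ((j : ℤ) * k') := by rw [hk]; ring
    rw [h1, zpow_mul, zpow_natCast]
  -- the unit c corresponding to k'
  have hu : IsUnit ((k' : ℤ) : ZMod m) := by
    have h1 : IsCoprime k' (m : ℤ) := Int.isCoprime_iff_gcd_eq_one.mpr hcop
    have h2 := h1.map (Int.castRingHom (ZMod m))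
    simp only [map_natCast, Int.coe_castRingHom] at h2
    rw [ZMod.natCast_self] at h2
    exact isCoprime_zero_right.mp h2
  set c : (ZMod m)ˣ := hu.unit with hcdef
  have hc : (c : ZMod m) = ((k' : ℤ) : ZMod m) := hu.unit_spec
  set F : (ZMod m)ˣ → ℂ := fun v => ζm ^ (((v : ZMod m).val : ℤ)) with hF
  -- step 1 : reduce to sum over units of ZMod n
  have step1 : ∑ j ∈ (Finset.Icc 1 n).filter (fun j => Nat.gcd j n = 1), ζ ^ ((j : ℤ) * k) =
      ∑ u : (ZMod n)ˣ, F (ZMod.unitsMap hmdvd u * c) := by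
    rcases eq_or_lt_of_le (show 1 ≤ n from hn) with h1 | h1
    · -- n = 1
      have hn1 : n = 1 := h1.symm
      subst hn1
      have hζ1 : ζ = 1 := by simpa using hζ.pow_eq_one
      have hζm1 : ζm = 1 := by rw [hζmdef, hζ1, one_pow]
      simp [hζ1, hζm1, hF]
    · have hIcc : (Finset.Icc 1 n).filter (fun j => Nat.gcd j n = 1) =
          (Finset.range n).filter (fun j => Nat.gcd j n = 1) := by
        ext j
        simp only [mem_filter, mem_Icc, mem_range]
        constructor
        · rintro ⟨⟨ha, hb⟩, hcp⟩
          refine ⟨?_, hcp⟩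
          rcases eq_or_lt_of_le hb with rfl | h
          · rw [Nat.gcd_self] at hcp; omega
          · exact h
        · rintro ⟨ha, hcp⟩
          refine ⟨⟨?_, ha.le⟩, hcp⟩
          rcases Nat.eq_zero_or_pos j with rfl | h
          · rw [Nat.gcd_zero_left] at hcp; omega
          · exact h
      rw [hIcc]
      rw [Finset.sum_congr rfl (fun j _ => hterm j)]
      refine Finset.sum_bij' (fun j hj => ZMod.unitOfCoprime j
          (by simpa [Nat.Coprime] using (Finset.mem_filter.mp hj).2))
        (fun u _ => (u : ZMod n).val) ?_ ?_ ?_ ?_ ?_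
      · intro j hj
        exact Finset.mem_univ _
      · intro u _
        simp only [mem_filter, mem_range]
        exact ⟨ZMod.val_lt _, ZMod.val_coe_unit_coprime u⟩
      · intro j hj
        simp only [mem_filter, mem_range] at hj
        simp [ZMod.coe_unitOfCoprime, ZMod.val_cast_of_lt hj.1]
      · intro u _
        apply Units.ext
        simp [ZMod.coe_unitOfCoprime, ZMod.natCast_val, ZMod.cast_id]
      · intro j hj
        -- ζm ^ (j * k') = F (unitsMap (unitOfCoprime j _) * c)
        apply zpow_congr_of_zmod_eq hm0 hζm
        push_cast
        rw [hc, ZMod.unitsMap_def]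
        simp only [Units.coe_map, MonoidHom.coe_coe, ZMod.castHom_apply,
          ZMod.coe_unitOfCoprime, ZMod.cast_natCast hmdvd]
        rw [ZMod.natCast_val, ZMod.cast_id]
  rw [step1]
  -- step 2 : fiberwise sum via surjectivity
  have hsurj := ZMod.unitsMap_surjective hmdvd
  have step2 := sum_comp_surj (ZMod.unitsMap hmdvd) hsurj (fun v => F (v * c))
  -- step 3 : translation invariance
  have step3 : ∑ v : (ZMod m)ˣ, F (v * c) = ∑ v : (ZMod m)ˣ, F v :=
    Fintype.sum_equiv (Equiv.mulRight c) _ _ (fun v => rfl)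
  -- step 4 : sum of primitive roots
  have step4 : ∑ v : (ZMod m)ˣ, F v = (ArithmeticFunction.moebius m : ℂ) := by
    rw [← sum_coprime_pow_eq_moebius m hm0 ζm hζm]
    refine Finset.sum_bij' (fun (u : (ZMod m)ˣ) (_ : u ∈ Finset.univ) => (u : ZMod m).val)
      (fun a ha => ZMod.unitOfCoprime a
        (by simpa [Nat.Coprime] using (Finset.mem_filter.mp ha).2)) ?_ ?_ ?_ ?_ ?_
    · intro u _
      simp only [mem_filter, mem_range]
      exact ⟨ZMod.val_lt _, ZMod.val_coe_unit_coprime u⟩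
    · intro a ha
      exact Finset.mem_univ _
    · intro u _
      apply Units.ext
      simp [ZMod.coe_unitOfCoprime, ZMod.natCast_val, ZMod.cast_id]
    · intro a ha
      simp only [mem_filter, mem_range] at ha
      simp [ZMod.coe_unitOfCoprime, ZMod.val_cast_of_lt ha.1]
    · intro u _
      exact zpow_natCast ζm _
  -- assemble
  have hcardn : (Fintype.card (ZMod n)ˣ : ℂ) = (Nat.totient n : ℂ) := by
    rw [ZMod.card_units_eq_totient]
  have hcardm : (Fintype.card (ZMod m)ˣ : ℂ) = (Nat.totient m : ℂ) := by
    rw [ZMod.card_units_eq_totient]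
  rw [step3, step4] at step2
  have htm0 : (Nat.totient m : ℂ) ≠ 0 := by
    exact_mod_cast (Nat.totient_pos.mpr hm0).ne'
  rw [hcardn, hcardm] at step2
  rw [eq_div_iff htm0]
  linear_combination step2
end

section
/- If n > 0, ζ is a primitive n-th root of unity, and k is an integer, then the Ramanujan sum c_n(k) = ∑_{0 < j ≤ n, gcd(j,n)=1} ζ^{jk} satisfies |c_n(k)| ≤ min(|k| + 1, n) for k ≠ 0; in particular |c_n(k)| ≤ gcd(k, n). -/
open Finset

local notation "μ" => ArithmeticFunction.moebius

private lemma sum_moeb' (D : ℕ) : ∑ d ∈ D.divisors, μ d = if D = 1 then 1 else 0 := by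
  have h := congrArg (fun f : ArithmeticFunction ℤ => f D)
    ArithmeticFunction.moebius_mul_coe_zeta
  simp only [ArithmeticFunction.mul_apply, ArithmeticFunction.one_apply,
    ArithmeticFunction.natCoe_apply] at h
  rw [← h, ← Nat.sum_div_divisors D (fun x => (μ x : ℤ)),
    Nat.sum_divisorsAntidiagonal' (f := fun a b => (μ a : ℤ) * ((ArithmeticFunction.zeta b : ℕ) : ℤ))]
  refine Finset.sum_congr rfl fun d hd => ?_
  rw [ArithmeticFunction.zeta_apply_ne (Nat.pos_of_mem_divisors hd).ne']
  simp

private lemma copart_fact' {t m : ℕ} (ht : 0 < t) (hm : 0 < m) (p : ℕ) (hp : p.Prime) :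
    (t / Nat.gcd t (m ^ t)).factorization p
      = if p ∣ m then 0 else t.factorization p := by
  have hgt : Nat.gcd t (m ^ t) ∣ t := Nat.gcd_dvd_left _ _
  rw [Nat.factorization_div hgt, Nat.factorization_gcd ht.ne' (pow_ne_zero _ hm.ne'),
    Nat.factorization_pow]
  simp only [Finsupp.coe_tsub, Pi.sub_apply, Finsupp.inf_apply, Finsupp.smul_apply,
    smul_eq_mul]
  split_ifs with h
  · have h1 : 1 ≤ m.factorization p := (Nat.Prime.factorization_pos_of_dvd hp hm.ne' h)
    have h2 : t.factorization p ≤ t * m.factorization p :=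
      le_trans (Nat.factorization_lt p ht.ne').le (Nat.le_mul_of_pos_right t h1)
    omega
  · rw [Nat.factorization_eq_zero_of_not_dvd h]
    omega

private lemma dvd_copart' {t m : ℕ} (ht : 0 < t) (hm : 0 < m) (d : ℕ) :
    d ∣ t / Nat.gcd t (m ^ t) ↔ d ∣ t ∧ Nat.Coprime d m := by
  have hgt : Nat.gcd t (m ^ t) ∣ t := Nat.gcd_dvd_left _ _
  have hPt : t / Nat.gcd t (m ^ t) ∣ t := ⟨_, (Nat.div_mul_cancel hgt).symm⟩
  have hPpos : 0 < t / Nat.gcd t (m ^ t) :=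
    Nat.div_pos (Nat.le_of_dvd ht hgt) (Nat.gcd_pos_of_pos_left _ ht)
  constructor
  · intro hdP
    refine ⟨hdP.trans hPt, ?_⟩
    by_contra hc
    obtain ⟨p, hp, hpd, hpm⟩ := Nat.Prime.not_coprime_iff_dvd.mp hc
    have h1 : 0 < (t / Nat.gcd t (m ^ t)).factorization p :=
      Nat.Prime.factorization_pos_of_dvd hp hPpos.ne' (hpd.trans hdP)
    rw [copart_fact' ht hm p hp, if_pos hpm] at h1
    exact absurd h1 (lt_irrefl 0)
  · rintro ⟨hdt, hcop⟩
    have hd0 : d ≠ 0 := fun h => by simp [h] at hdt; omega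
    rw [← Nat.factorization_le_iff_dvd hd0 hPpos.ne']
    intro p
    rcases Nat.eq_zero_or_pos (d.factorization p) with h | h
    · simp [h]
    have hp : p.Prime := Nat.prime_of_mem_primeFactors ((Nat.support_factorization d) ▸
      Finsupp.mem_support_iff.mpr h.ne')
    have hpd : p ∣ d := Nat.dvd_of_factorization_pos h.ne'
    have hpm : ¬ p ∣ m := fun hpm => hp.one_lt.ne' (Nat.dvd_one.mp (hcop ▸ Nat.dvd_gcd hpd hpm))
    rw [copart_fact' ht hm p hp, if_neg hpm]
    exact (Nat.factorization_le_iff_dvd hd0 ht.ne').mpr hdt p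
private lemma key_bound' (n g : ℕ) (hn : 0 < n) (hg : g ∣ n) (hg0 : 0 < g) :
    |∑ e ∈ g.divisors, μ (n / e) * (e : ℤ)| ≤ (g : ℤ) := by
  set m := n / g with hm_def
  have hm : 0 < m := Nat.div_pos (Nat.le_of_dvd hn hg) hg0
  have hnmg : n = m * g := (Nat.div_mul_cancel hg).symm
  -- reindex e ↦ g / e
  have h1 : ∑ e ∈ g.divisors, μ (n / e) * (e : ℤ)
      = ∑ d ∈ g.divisors, μ (m * d) * ((g / d : ℕ) : ℤ) := by
    rw [← Nat.sum_div_divisors g (fun e => μ (n / e) * (e : ℤ))]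
    refine Finset.sum_congr rfl fun d hd => ?_
    have hdg : d ∣ g := Nat.dvd_of_mem_divisors hd
    have hd0 : 0 < d := Nat.pos_of_mem_divisors hd
    have key : n / (g / d) = m * d := by
      have hgd : 0 < g / d := Nat.div_pos (Nat.le_of_dvd hg0 hdg) hd0
      have : n = (m * d) * (g / d) := by rw [mul_assoc, Nat.mul_div_cancel' hdg, hnmg]
      rw [this, Nat.mul_div_cancel _ hgd]
    rw [key]
  -- split moebius of product
  have h2 : ∑ d ∈ g.divisors, μ (m * d) * ((g / d : ℕ) : ℤ)
      = μ m * ∑ d ∈ g.divisors.filter (fun d => Nat.Coprime m d), μ d * ((g / d : ℕ) : ℤ) := by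
    rw [Finset.mul_sum, Finset.sum_filter]
    refine Finset.sum_congr rfl fun d _ => ?_
    by_cases h : Nat.Coprime m d
    · rw [if_pos h, ArithmeticFunction.isMultiplicative_moebius.map_mul_of_coprime h]; ring
    · rw [if_neg h, ArithmeticFunction.moebius_eq_zero_of_not_squarefree, Int.zero_mul]
      obtain ⟨p, hp, hpm, hpd⟩ := Nat.Prime.not_coprime_iff_dvd.mp h
      intro hsq
      exact hp.one_lt.ne' (Nat.isUnit_iff.mp (hsq p (mul_dvd_mul hpm hpd)))
  -- counting bound for T
  set F := g.divisors.filter (fun d => Nat.Coprime m d) with hF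
  have h3 : ∑ d ∈ F, μ d * ((g / d : ℕ) : ℤ)
      = ∑ j ∈ Finset.Icc 1 g, ∑ d ∈ F.filter (· ∣ j), μ d := by
    have hcount : ∀ d ∈ F, ((g / d : ℕ) : ℤ)
        = ∑ j ∈ Finset.Icc 1 g, if d ∣ j then (1 : ℤ) else 0 := by
      intro d hd
      rw [← Finset.sum_filter, Finset.sum_const, nsmul_eq_mul, mul_one,
        show Finset.Icc 1 g = Finset.Ioc 0 g from rfl, Nat.Ioc_filter_dvd_card_eq_div g d]
    rw [Finset.sum_congr rfl fun d hd => by rw [hcount d hd]]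
    simp_rw [Finset.mul_sum, mul_ite, mul_one, mul_zero]
    rw [Finset.sum_comm]
    exact Finset.sum_congr rfl fun j _ => (Finset.sum_filter _ _).symm
  -- each inner sum is 0 or 1
  have h4 : ∀ j ∈ Finset.Icc 1 g, ∃ D : ℕ, F.filter (· ∣ j) = D.divisors := by
    intro j hj
    have hj1 : 1 ≤ j := (Finset.mem_Icc.mp hj).1
    set t := Nat.gcd j g with ht_def
    have ht : 0 < t := Nat.gcd_pos_of_pos_left g hj1
    refine ⟨t / Nat.gcd t (m ^ t), ?_⟩
    ext d
    simp only [Finset.mem_filter, hF, Nat.mem_divisors]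
    constructor
    · rintro ⟨⟨⟨hdg, -⟩, hcop⟩, hdj⟩
      exact ⟨(dvd_copart' ht hm d).mpr ⟨Nat.dvd_gcd hdj hdg, hcop.symm⟩, by
        have := Nat.div_pos (Nat.le_of_dvd ht (Nat.gcd_dvd_left t (m^t))) (Nat.gcd_pos_of_pos_left _ ht)
        omega⟩
    · rintro ⟨hd, -⟩
      obtain ⟨hdt, hcop⟩ := (dvd_copart' ht hm d).mp hd
      exact ⟨⟨⟨hdt.trans (Nat.gcd_dvd_right j g), hg0.ne'⟩, hcop.symm⟩,
        hdt.trans (Nat.gcd_dvd_left j g)⟩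
  -- conclude
  have hT0 : (0:ℤ) ≤ ∑ j ∈ Finset.Icc 1 g, ∑ d ∈ F.filter (· ∣ j), μ d := by
    refine Finset.sum_nonneg fun j hj => ?_
    obtain ⟨D, hD⟩ := h4 j hj
    rw [hD, sum_moeb']
    split_ifs <;> norm_num
  have hTle : ∑ j ∈ Finset.Icc 1 g, ∑ d ∈ F.filter (· ∣ j), μ d ≤ (g:ℤ) := by
    calc ∑ j ∈ Finset.Icc 1 g, ∑ d ∈ F.filter (· ∣ j), μ d
        ≤ ∑ j ∈ Finset.Icc 1 g, 1 := by
          refine Finset.sum_le_sum fun j hj => ?_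
          obtain ⟨D, hD⟩ := h4 j hj
          rw [hD, sum_moeb']
          split_ifs <;> norm_num
      _ = (g:ℤ) := by simp
  rw [h1, h2, h3, abs_mul]
  calc |(μ m : ℤ)| * |∑ j ∈ Finset.Icc 1 g, ∑ d ∈ F.filter (· ∣ j), μ d|
      ≤ 1 * (g:ℤ) := by
        refine mul_le_mul ArithmeticFunction.abs_moebius_le_one ?_ (abs_nonneg _) zero_le_one
        rw [abs_of_nonneg hT0]; exact hTle
    _ = (g:ℤ) := one_mul _
private lemma geom_icc' (w : ℂ) (N : ℕ) (hw : w ^ N = 1) :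
    ∑ j ∈ Finset.Icc 1 N, w ^ j = if w = 1 then (N : ℂ) else 0 := by
  split_ifs with h
  · subst h; simp
  · rw [← Finset.Ico_add_one_right_eq_Icc, Finset.sum_Ico_eq_sum_range]
    have : ∀ i, w ^ (1 + i) = w * w ^ i := fun i => by rw [pow_add, pow_one]
    rw [Finset.sum_congr rfl fun i _ => this i, ← Finset.mul_sum, geom_sum_eq h,
      Nat.add_sub_cancel, hw, sub_self, zero_div, mul_zero]

private lemma ramanujan_eq' (n : ℕ) (hn : 0 < n) (z : ℂ) (hz : IsPrimitiveRoot z n) (k : ℤ) :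
    (∑ j ∈ (Finset.Icc 1 n).filter (fun j => Nat.gcd j n = 1), z ^ ((j : ℤ) * k))
      = ((∑ e ∈ (Int.gcd k n).divisors, μ (n / e) * (e : ℤ) : ℤ) : ℂ) := by
  -- step 1: Möbius indicator
  have step1 : (∑ j ∈ (Finset.Icc 1 n).filter (fun j => Nat.gcd j n = 1), z ^ ((j : ℤ) * k))
      = ∑ j ∈ Finset.Icc 1 n, ∑ d ∈ n.divisors.filter (· ∣ j), (μ d : ℂ) * z ^ ((j : ℤ) * k) := by
    rw [Finset.sum_filter]
    refine Finset.sum_congr rfl fun j hj => ?_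
    have hj1 : 1 ≤ j := (Finset.mem_Icc.mp hj).1
    have hset : n.divisors.filter (· ∣ j) = (Nat.gcd j n).divisors := by
      ext d
      simp only [Finset.mem_filter, Nat.mem_divisors]
      constructor
      · rintro ⟨⟨hdn, -⟩, hdj⟩
        exact ⟨Nat.dvd_gcd hdj hdn, (Nat.gcd_pos_of_pos_left n hj1).ne'⟩
      · rintro ⟨hd, -⟩
        exact ⟨⟨hd.trans (Nat.gcd_dvd_right j n), hn.ne'⟩, hd.trans (Nat.gcd_dvd_left j n)⟩
    rw [hset, ← Finset.sum_mul]
    have : (∑ d ∈ (Nat.gcd j n).divisors, (μ d : ℂ))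
        = ((if Nat.gcd j n = 1 then 1 else 0 : ℤ) : ℂ) := by
      rw [← sum_moeb']; push_cast; ring
    rw [this]
    split_ifs <;> simp
  -- step 2: swap sums
  have step2 : ∑ j ∈ Finset.Icc 1 n, ∑ d ∈ n.divisors.filter (· ∣ j), (μ d : ℂ) * z ^ ((j : ℤ) * k)
      = ∑ d ∈ n.divisors, (μ d : ℂ) * ∑ j ∈ (Finset.Icc 1 n).filter (d ∣ ·), z ^ ((j : ℤ) * k) := by
    simp_rw [Finset.mul_sum]
    rw [Finset.sum_comm']
    intro d j
    simp only [Finset.mem_filter, Nat.mem_divisors]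
    tauto
  -- step 3: inner geometric sum
  have step3 : ∀ d ∈ n.divisors, (∑ j ∈ (Finset.Icc 1 n).filter (d ∣ ·), z ^ ((j : ℤ) * k))
      = if (n / d : ℕ) ∣ k.natAbs then ((n / d : ℕ) : ℂ) else 0 := by
    intro d hd
    obtain ⟨hdn, -⟩ := Nat.mem_divisors.mp hd
    have hd0 : 0 < d := Nat.pos_of_mem_divisors hd
    have hnd : d * (n / d) = n := Nat.mul_div_cancel' hdn
    have himg : (Finset.Icc 1 n).filter (d ∣ ·) = (Finset.Icc 1 (n / d)).image (fun c => d * c) := by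
      ext j
      simp only [Finset.mem_filter, Finset.mem_Icc, Finset.mem_image]
      constructor
      · rintro ⟨⟨h1, h2⟩, c, rfl⟩
        have hc : 0 < c := Nat.pos_of_ne_zero fun hc => by simp [hc] at h1
        refine ⟨c, ⟨hc, (Nat.le_div_iff_mul_le hd0).mpr (by linarith [mul_comm d c])⟩, rfl⟩
      · rintro ⟨c, ⟨h1, h2⟩, rfl⟩
        refine ⟨⟨Nat.mul_pos hd0 h1, ?_⟩, Dvd.intro c rfl⟩
        calc d * c ≤ d * (n / d) := Nat.mul_le_mul_left d h2
          _ = n := hnd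
    rw [himg, Finset.sum_image (fun a _ b _ h => Nat.eq_of_mul_eq_mul_left hd0 h)]
    have hpow : ∀ c : ℕ, z ^ (((d * c : ℕ) : ℤ) * k) = (z ^ ((d : ℤ) * k)) ^ c := by
      intro c
      rw [← zpow_natCast (z ^ ((d : ℤ) * k)) c, ← zpow_mul]
      congr 1
      push_cast
      ring
    rw [Finset.sum_congr rfl fun c _ => hpow c]
    have hNpow : (z ^ ((d : ℤ) * k)) ^ (n / d) = 1 := by
      rw [← zpow_natCast, ← zpow_mul, hz.zpow_eq_one_iff_dvd]
      refine ⟨k, ?_⟩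
      conv_rhs => rw [← hnd]
      rw [Nat.cast_mul]
      ring
    have hiff : ((n : ℤ) ∣ (d : ℤ) * k) ↔ ((n / d : ℕ) ∣ k.natAbs) := by
      rw [← Int.natCast_dvd]
      constructor
      · rintro h
        have h2 : ((d : ℤ)) * ((n / d : ℕ) : ℤ) ∣ (d : ℤ) * k := by
          rw [show ((d:ℤ)) * ((n/d:ℕ):ℤ) = ((d * (n/d) : ℕ) : ℤ) by push_cast; ring, hnd]
          exact h
        exact (mul_dvd_mul_iff_left (by exact_mod_cast hd0.ne' : (d:ℤ) ≠ 0)).mp h2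
      · intro h
        have := mul_dvd_mul_left (d : ℤ) h
        rwa [show (d:ℤ) * ((n/d:ℕ):ℤ) = ((n:ℕ):ℤ) by conv_rhs => rw [← hnd, Nat.cast_mul]] at this
    rw [geom_icc' _ _ hNpow]
    simp only [hz.zpow_eq_one_iff_dvd, hiff]
  -- step 4: combine and reindex
  rw [step1, step2, Finset.sum_congr rfl fun d hd => by rw [step3 d hd]]
  have step4 : ∑ d ∈ n.divisors, (μ d : ℂ) * (if (n / d : ℕ) ∣ k.natAbs then ((n / d : ℕ) : ℂ) else 0)
      = ∑ e ∈ n.divisors, (μ (n / e) : ℂ) * (if e ∣ k.natAbs then (e : ℂ) else 0) := by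
    rw [← Nat.sum_div_divisors n (fun e => (μ (n / e) : ℂ) * (if e ∣ k.natAbs then (e : ℂ) else 0))]
    refine Finset.sum_congr rfl fun d hd => ?_
    rw [Nat.div_div_self (Nat.dvd_of_mem_divisors hd) hn.ne']
  rw [step4]
  have step5 : ∑ e ∈ n.divisors, (μ (n / e) : ℂ) * (if e ∣ k.natAbs then (e : ℂ) else 0)
      = ∑ e ∈ (Int.gcd k n).divisors, (μ (n / e) : ℂ) * (e : ℂ) := by
    simp_rw [mul_ite, mul_zero]
    rw [← Finset.sum_filter]
    congr 1
    have hfeq : n.divisors.filter (· ∣ k.natAbs) = n.divisors.filter (· ∣ Int.gcd k n) := by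
      refine Finset.filter_congr fun e he => ?_
      have hen : e ∣ n := Nat.dvd_of_mem_divisors he
      unfold Int.gcd
      simp only [Int.natAbs_natCast]
      exact ⟨fun h => Nat.dvd_gcd h hen, fun h => h.trans (Nat.gcd_dvd_left _ _)⟩
    rw [hfeq, Nat.divisors_filter_dvd_of_dvd hn.ne']
    show Int.gcd k n ∣ n
    have : Int.gcd k n = Nat.gcd k.natAbs n := by unfold Int.gcd; simp
    rw [this]
    exact Nat.gcd_dvd_right _ _
  rw [step5]
  push_cast
  rfl

/-- Bounds for the Ramanujan sum `c_n(k) = ∑_{0 < j ≤ n, gcd(j,n)=1} ζ^{jk}`: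
`|c_n(k)| ≤ min(|k| + 1, n)` for `k ≠ 0`, and in particular `|c_n(k)| ≤ gcd(k, n)`. -/
theorem ramanujan_sum_bounds (n : ℕ) (hn : 0 < n) (ζ : ℂ) (hζ : IsPrimitiveRoot ζ n)
    (k : ℤ) :
    (k ≠ 0 →
      ‖(∑ j ∈ (Finset.Icc 1 n).filter (fun j => Nat.gcd j n = 1),
          ζ ^ ((j : ℤ) * k))‖ ≤ min ((|k| : ℝ) + 1) (n : ℝ)) ∧
    ‖(∑ j ∈ (Finset.Icc 1 n).filter (fun j => Nat.gcd j n = 1),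
        ζ ^ ((j : ℤ) * k))‖ ≤ (Int.gcd k n : ℝ) := by
  have hgn : Int.gcd k (n : ℤ) = Nat.gcd k.natAbs n := by unfold Int.gcd; simp
  have hgdvd : Int.gcd k (n : ℤ) ∣ n := by rw [hgn]; exact Nat.gcd_dvd_right _ _
  have hg0 : 0 < Int.gcd k (n : ℤ) := by
    rw [hgn]; exact Nat.gcd_pos_of_pos_right _ hn
  have heq := ramanujan_eq' n hn ζ hζ k
  have hb := key_bound' n (Int.gcd k (n : ℤ)) hn hgdvd hg0
  have habs : ‖(∑ j ∈ (Finset.Icc 1 n).filter (fun j => Nat.gcd j n = 1),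
      ζ ^ ((j : ℤ) * k))‖ ≤ (Int.gcd k (n : ℤ) : ℝ) := by
    rw [heq, Complex.norm_intCast]
    calc |((∑ e ∈ (Int.gcd k (n:ℤ)).divisors, μ (n / e) * (e : ℤ) : ℤ) : ℝ)|
        = ((|∑ e ∈ (Int.gcd k (n:ℤ)).divisors, μ (n / e) * (e : ℤ)| : ℤ) : ℝ) := by
          push_cast; rfl
      _ ≤ ((Int.gcd k (n:ℤ) : ℤ) : ℝ) := by exact_mod_cast hb
      _ = (Int.gcd k (n:ℤ) : ℝ) := by push_cast; rfl
  refine ⟨fun hk => habs.trans (le_min ?_ ?_), habs⟩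
  · have h1 : Int.gcd k (n : ℤ) ≤ k.natAbs :=
      Nat.le_of_dvd (Int.natAbs_pos.mpr hk) (hgn ▸ Nat.gcd_dvd_left _ _)
    have h2 : (|(k : ℝ)| : ℝ) = (k.natAbs : ℝ) := by
      rw [Nat.cast_natAbs (α := ℝ) (n := k)]
      push_cast
      simp [Int.cast_abs]
    calc (Int.gcd k (n : ℤ) : ℝ) ≤ (k.natAbs : ℝ) := by exact_mod_cast h1
      _ ≤ (|k| : ℝ) + 1 := by rw [h2]; linarith
  · exact_mod_cast Nat.le_of_dvd hn hgdvd
end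

section
/- For every integer n > 1 and every complex number x with |x| ≥ R > 1, the cyclotomic polynomial satisfies |Φ_n(x)| < R^{φ(n)} · exp(1/(R−1)) · (|x|/R)^{φ(n)}; in particular if |x| = R then |Φ_n(x)| < R^{φ(n)} exp(1/(R−1)). -/
open Polynomial

namespace AbsCyclotomicAux

open Finset ArithmeticFunction
open scoped ArithmeticFunction.Moebius

lemma gcd_mul_of_coprime {a b : ℕ} (j : ℕ) (h : Nat.Coprime a b) :
    Nat.gcd (a * b) j = Nat.gcd a j * Nat.gcd b j := by
  apply Nat.dvd_antisymm
  · have h1 : Nat.gcd (a * b) j ∣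
        Nat.gcd (Nat.gcd (a * b) j) a * Nat.gcd (Nat.gcd (a * b) j) b :=
      Nat.dvd_gcd_mul_gcd_iff_dvd_mul.mpr (Nat.gcd_dvd_left _ _)
    refine h1.trans (mul_dvd_mul ?_ ?_) <;>
      exact Nat.dvd_gcd (Nat.gcd_dvd_right _ _)
        ((Nat.gcd_dvd_left _ _).trans (Nat.gcd_dvd_right _ _))
  · have hcop : Nat.Coprime (Nat.gcd a j) (Nat.gcd b j) :=
      Nat.Coprime.coprime_dvd_left (Nat.gcd_dvd_left a j)
        (Nat.Coprime.coprime_dvd_right (Nat.gcd_dvd_left b j) h)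
    exact Nat.dvd_gcd (mul_dvd_mul (Nat.gcd_dvd_left _ _) (Nat.gcd_dvd_left _ _))
      (hcop.mul_dvd_of_dvd_of_dvd (Nat.gcd_dvd_right _ _) (Nat.gcd_dvd_right _ _))

/-- The multiplicative function `d ↦ d·[d ∣ j]`. -/
def fdvd (j : ℕ) : ArithmeticFunction ℤ :=
  ⟨fun d => if d ∣ j then (d : ℤ) else 0, by simp⟩

@[simp] lemma fdvd_apply (j d : ℕ) : fdvd j d = if d ∣ j then (d : ℤ) else 0 := rfl

lemma fdvd_mult (j : ℕ) : (fdvd j).IsMultiplicative := by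
  refine ⟨by simp, ?_⟩
  intro m n h
  simp only [fdvd_apply]
  by_cases hm : m ∣ j
  · by_cases hn : n ∣ j
    · rw [if_pos (h.mul_dvd_of_dvd_of_dvd hm hn), if_pos hm, if_pos hn]; push_cast; ring
    · rw [if_neg fun hmn => hn ((dvd_mul_left n m).trans hmn), if_neg hn, mul_zero]
  · rw [if_neg fun hmn => hm ((dvd_mul_right m n).trans hmn), if_neg hm, zero_mul]

/-- Ramanujan sum (as a function of `n`, with `j` fixed). -/
def cR (j : ℕ) : ArithmeticFunction ℤ := fdvd j * moebius

lemma cR_apply (j n : ℕ) :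
    cR j n = ∑ p ∈ n.divisorsAntidiagonal, (if p.1 ∣ j then (p.1 : ℤ) else 0) * μ p.2 := by
  simp [cR, mul_apply]

lemma abs_cR_le (j n : ℕ) : |cR j n| ≤ (Nat.gcd n j : ℤ) := by
  have hmult : (cR j).IsMultiplicative := (fdvd_mult j).mul isMultiplicative_moebius
  induction n using Nat.recOnPosPrimePosCoprime with
  | zero => simp
  | one => simp [hmult.map_one]
  | coprime a b ha hb hab iha ihb =>
      rw [hmult.map_mul_of_coprime hab, gcd_mul_of_coprime j hab, abs_mul, Nat.cast_mul]
      exact mul_le_mul iha ihb (abs_nonneg _) (Int.ofNat_nonneg _)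
  | prime_pow p k hp hk =>
      have hk1 : 1 ≤ k := hk
      have hterm : ∀ i ∈ Finset.range (k + 1), i ∉ ({k - 1, k} : Finset ℕ) →
          (if p ^ i ∣ j then ((p ^ i : ℕ) : ℤ) else 0) * μ (p ^ k / p ^ i) = 0 := by
        intro i hi hni
        simp only [Finset.mem_insert, Finset.mem_singleton, not_or] at hni
        have hik : i ≤ k := Nat.lt_succ_iff.mp (Finset.mem_range.mp hi)
        rw [Nat.pow_div hik hp.pos, moebius_apply_prime_pow hp (by omega),
          if_neg (show ¬ k - i = 1 by omega), mul_zero]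
      have hsum : cR j (p ^ k) =
          ∑ i ∈ ({k - 1, k} : Finset ℕ),
            (if p ^ i ∣ j then ((p ^ i : ℕ) : ℤ) else 0) * μ (p ^ k / p ^ i) := by
        rw [cR_apply, Nat.sum_divisorsAntidiagonal
          (fun d e => (if d ∣ j then (d : ℤ) else 0) * μ e), Nat.sum_divisors_prime_pow hp]
        exact (Finset.sum_subset (by
          intro i hi
          simp only [Finset.mem_insert, Finset.mem_singleton] at hi
          simp only [Finset.mem_range]
          omega) hterm).symm
      rw [hsum, Finset.sum_pair (by omega : k - 1 ≠ k)]
      rw [Nat.pow_div (by omega) hp.pos, Nat.pow_div le_rfl hp.pos, Nat.sub_self, pow_zero,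
        show k - (k - 1) = 1 by omega, pow_one, moebius_apply_prime hp, moebius_apply_one]
      by_cases h1 : p ^ (k - 1) ∣ j
      · by_cases h2 : p ^ k ∣ j
        · rw [if_pos h1, if_pos h2, Nat.gcd_eq_left h2]
          have hle : (p : ℤ) ^ (k - 1) ≤ (p : ℤ) ^ k :=
            pow_le_pow_right₀ (by exact_mod_cast hp.one_lt.le) (by omega)
          rw [abs_of_nonneg (by push_cast; linarith)]
          push_cast
          linarith [pow_pos (by exact_mod_cast hp.pos : (0:ℤ) < (p:ℤ)) (k - 1)]
        · rw [if_pos h1, if_neg h2, mul_neg_one, zero_mul, add_zero, abs_neg,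
            abs_of_nonneg (Int.ofNat_nonneg _)]
          have hd : p ^ (k - 1) ∣ Nat.gcd (p ^ k) j :=
            Nat.dvd_gcd (pow_dvd_pow p (by omega)) h1
          exact_mod_cast Nat.le_of_dvd (Nat.gcd_pos_of_pos_left j (pow_pos hp.pos k)) hd
      · have h2 : ¬ p ^ k ∣ j := fun h => h1 ((pow_dvd_pow p (by omega)).trans h)
        rw [if_neg h1, if_neg h2, zero_mul, mul_one, zero_add]
        simp


lemma cyclotomic_eval_ne_zero (m : ℕ) (hm : 0 < m) (x : ℂ) (hx1 : 1 < ‖x‖) :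
    (Polynomial.cyclotomic m ℂ).eval x ≠ 0 := by
  have hg : x ^ m - 1 ≠ 0 := by
    intro h
    rw [sub_eq_zero] at h
    have h2 : ‖x ^ m‖ = 1 := by rw [h, norm_one]
    rw [norm_pow] at h2
    have := one_lt_pow₀ hx1 hm.ne'
    linarith
  intro h0
  refine hg ?_
  rw [show x ^ m - 1 = (Polynomial.X ^ m - 1 : Polynomial ℂ).eval x by simp,
    ← Polynomial.prod_cyclotomic_eq_X_pow_sub_one hm ℂ, Polynomial.eval_prod]
  exact Finset.prod_eq_zero (Nat.mem_divisors_self m hm.ne') h0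

lemma key (n : ℕ) (hn : 1 < n) (x : ℂ) (hx1 : 1 < ‖x‖) :
    Real.log (‖(cyclotomic n ℂ).eval x‖) <
      n.totient * Real.log (‖x‖) + (‖x‖ - 1)⁻¹ := by
  have hx0 : x ≠ 0 := by
    intro h; rw [h, norm_zero] at hx1; linarith
  have ha0 : (0:ℝ) < ‖x‖ := by linarith
  have hg : ∀ m : ℕ, 0 < m → x ^ m - 1 ≠ 0 := by
    intro m hm h
    rw [sub_eq_zero] at h
    have h2 : ‖x ^ m‖ = 1 := by rw [h, norm_one]
    rw [norm_pow] at h2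
    have := one_lt_pow₀ hx1 hm.ne'
    linarith
  have hprod : ∀ m > 0, ∏ i ∈ m.divisors, (cyclotomic i ℂ).eval x = x ^ m - 1 := by
    intro m hm
    rw [← eval_prod, prod_cyclotomic_eq_X_pow_sub_one hm]
    simp
  have hf : ∀ m : ℕ, 0 < m → (cyclotomic m ℂ).eval x ≠ 0 := by
    intro m hm h0
    exact hg m hm (by rw [← hprod m hm]; exact Finset.prod_eq_zero (Nat.mem_divisors_self m hm.ne') h0)
  have hinv := (prod_eq_iff_prod_pow_moebius_eq_of_nonzero
    (f := fun m => (cyclotomic m ℂ).eval x) (g := fun m => x ^ m - 1) hf hg).mp hprod n (by omega)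
  -- basic facts about x⁻¹ ^ d
  have hzlt : ∀ d : ℕ, 0 < d → ‖x⁻¹ ^ d‖ < 1 := by
    intro d hd
    rw [norm_pow, norm_inv]
    exact pow_lt_one₀ (by positivity) (inv_lt_one_of_one_lt₀ hx1) hd.ne'
  have hne : ∀ d : ℕ, 0 < d → (1 : ℂ) - x⁻¹ ^ d ≠ 0 := by
    intro d hd h
    rw [sub_eq_zero] at h
    have := hzlt d hd
    rw [← h, norm_one] at this
    linarith
  -- logarithm of the product formula
  have hlog1 : Real.log (‖(cyclotomic n ℂ).eval x‖) =
      ∑ p ∈ n.divisorsAntidiagonal, (μ p.1 : ℝ) * Real.log (‖x ^ p.2 - 1‖) := by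
    rw [← hinv, norm_prod, Real.log_prod]
    · exact Finset.sum_congr rfl fun p hp => by rw [norm_zpow, Real.log_zpow]
    · intro p hp
      have h2 := hg p.2 (Nat.pos_of_mem_divisors (Nat.snd_mem_divisors_of_mem_antidiagonal hp))
      rw [norm_zpow]
      exact zpow_ne_zero _ (norm_ne_zero_iff.mpr h2)
  have hlog2 : ∀ p ∈ n.divisorsAntidiagonal,
      Real.log (‖x ^ p.2 - 1‖) =
        (p.2 : ℝ) * Real.log (‖x‖) + Real.log (‖1 - x⁻¹ ^ p.2‖) := by
    intro p hp
    have hd : 0 < p.2 := Nat.pos_of_mem_divisors (Nat.snd_mem_divisors_of_mem_antidiagonal hp)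
    have hxx : x ^ p.2 - 1 = x ^ p.2 * (1 - x⁻¹ ^ p.2) := by
      rw [mul_sub, mul_one, ← mul_pow, mul_inv_cancel₀ hx0, one_pow]
    rw [hxx, norm_mul, Real.log_mul (by
        simp only [norm_pow]
        positivity) (norm_ne_zero_iff.mpr (hne p.2 hd)), norm_pow, Real.log_pow]
  have htot : ∑ p ∈ n.divisorsAntidiagonal, (μ p.1 : ℝ) * (p.2 : ℝ) = (n.totient : ℝ) := by
    have := (sum_eq_iff_sum_mul_moebius_eq (R := ℝ)
      (f := fun i => (i.totient : ℝ)) (g := fun i => (i : ℝ))).mp ?_ n (by omega)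
    · exact this
    · intro m hm
      exact_mod_cast congrArg (Nat.cast : ℕ → ℝ) (Nat.sum_totient m)
  set T : ℝ := ∑ p ∈ n.divisorsAntidiagonal, (μ p.1 : ℝ) * Real.log (‖1 - x⁻¹ ^ p.2‖)
    with hT
  have hlog3 : Real.log (‖(cyclotomic n ℂ).eval x‖) =
      (n.totient : ℝ) * Real.log (‖x‖) + T := by
    rw [hlog1, Finset.sum_congr rfl (fun p hp => by rw [hlog2 p hp])]
    simp only [mul_add, ← mul_assoc]
    rw [Finset.sum_add_distrib, ← Finset.sum_mul, htot]
  rw [hlog3]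
  have hTbound : T < (‖x‖ - 1)⁻¹ := by
    set A := n.divisorsAntidiagonal with hA
    set F : ℕ × ℕ → ℕ → ℝ :=
      fun p j => if p.2 ∣ j then (-(μ p.1 : ℝ)) * (x⁻¹ ^ j).re * p.2 / j else 0 with hFdef
    have hF : ∀ p ∈ A, HasSum (F p)
        ((μ p.1 : ℝ) * Real.log (‖1 - x⁻¹ ^ p.2‖)) := by
      intro p hp
      have hd : 0 < p.2 := Nat.pos_of_mem_divisors (Nat.snd_mem_divisors_of_mem_antidiagonal hp)
      have h1 : HasSum (fun k : ℕ => ((x⁻¹ ^ p.2) ^ k / k : ℂ))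
          (-Complex.log (1 - x⁻¹ ^ p.2)) :=
        Complex.hasSum_taylorSeries_neg_log (by
          exact hzlt p.2 hd)
      have h2 := Complex.hasSum_re h1
      rw [Complex.neg_re, Complex.log_re] at h2
      have h3 := h2.mul_left (-(μ p.1 : ℝ))
      rw [neg_mul_neg] at h3
      have hinj : Function.Injective (fun k : ℕ => p.2 * k) :=
        fun a b h => Nat.eq_of_mul_eq_mul_left hd h
      have hsupp : ∀ j ∉ Set.range (fun k : ℕ => p.2 * k), F p j = 0 := by
        intro j hj
        rw [hFdef]
        refine if_neg fun hdvd => hj ?_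
        obtain ⟨k, hk⟩ := hdvd
        exact ⟨k, hk.symm⟩
      refine (Function.Injective.hasSum_iff hinj hsupp).mp ?_
      convert h3 using 1
      · rfl
      funext k
      simp only [hFdef, Function.comp_apply]
      rw [if_pos (dvd_mul_right _ _)]
      rcases Nat.eq_zero_or_pos k with rfl | hk
      · simp
      · rw [← pow_mul, Complex.div_natCast_re]
        push_cast
        rw [mul_comm (p.2:ℝ) (k:ℝ), mul_div_mul_right _ _ (by positivity : (p.2:ℝ) ≠ 0),
          mul_div_assoc]
    have HT : HasSum (fun j => ∑ p ∈ A, F p j) T := hasSum_sum hF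
    -- geometric majorant
    set r : ℝ := (‖x‖)⁻¹ with hr
    have hr0 : 0 < r := by positivity
    have hr1 : r < 1 := inv_lt_one_of_one_lt₀ hx1
    set geo : ℕ → ℝ := fun j => if j = 0 then 0 else r ^ j with hgeo
    have Hgeo : HasSum geo ((‖x‖ - 1)⁻¹) := by
      have g1 : HasSum (fun j : ℕ => r ^ j) (1 - r)⁻¹ :=
        hasSum_geometric_of_lt_one hr0.le hr1
      have g2 : HasSum (fun j : ℕ => if j = 0 then (1:ℝ) else 0) 1 := hasSum_ite_eq 0 1
      have g3 := g1.sub g2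
      convert g3 using 1
      · rfl
      · funext j
        rcases eq_or_ne j 0 with rfl | hj
        · simp [hgeo]
        · simp [hgeo, hj]
      · have h10 : ‖x‖ - 1 ≠ 0 := by linarith
        have h11 : (1 : ℝ) - r ≠ 0 := by linarith
        have h12 : ‖x‖ ≠ 0 := by linarith
        rw [eq_sub_iff_add_eq, hr]
        field_simp
        ring
    -- pointwise comparison
    have hcRcast : ∀ j : ℕ, ∑ p ∈ A, F p j = -((cR j n : ℤ) : ℝ) * (x⁻¹ ^ j).re / (j : ℝ) := by
      intro j
      have e1 : ∀ p ∈ A, F p j =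
          (if p.2 ∣ j then (-(μ p.1 : ℝ)) * p.2 else 0) * ((x⁻¹ ^ j).re / j) := by
        intro p hp
        simp only [hFdef]
        split_ifs with h
        · ring
        · rw [zero_mul]
      rw [Finset.sum_congr rfl e1, ← Finset.sum_mul]
      have e2 : ∑ p ∈ A, (if p.2 ∣ j then (-(μ p.1 : ℝ)) * p.2 else 0)
          = -((cR j n : ℤ) : ℝ) := by
        have e3 : ((cR j n : ℤ) : ℝ)
            = ∑ p ∈ A, (if p.1 ∣ j then (p.1 : ℝ) else 0) * (μ p.2 : ℝ) := by
          rw [cR_apply]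
          push_cast
          exact Finset.sum_congr rfl fun p hp => by split_ifs <;> push_cast <;> ring
        rw [e3, hA, ← Finset.sum_neg_distrib]
        rw [Nat.sum_divisorsAntidiagonal'
          (f := fun d e => (if e ∣ j then (-(μ d : ℝ)) * e else 0)),
          Nat.sum_divisorsAntidiagonal
          (f := fun d e => -((if d ∣ j then (d : ℝ) else 0) * (μ e : ℝ)))]
        exact Finset.sum_congr rfl fun d hd => by split_ifs <;> ring
      rw [e2]
      ring
    have habsre : ∀ j : ℕ, |(x⁻¹ ^ j).re| ≤ r ^ j := by
      intro j
      refine (Complex.abs_re_le_norm _).trans_eq ?_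
      rw [norm_pow, norm_inv]
    have hbound : ∀ j : ℕ, 1 ≤ j → ∀ g : ℕ, |(cR j n : ℤ)| ≤ (g : ℤ) → (g:ℝ) ≤ j →
        ∑ p ∈ A, F p j ≤ (g : ℝ) * r ^ j / j := by
      intro j hj g hg hgj
      rw [hcRcast j]
      calc -((cR j n : ℤ) : ℝ) * (x⁻¹ ^ j).re / (j : ℝ)
          ≤ |(-((cR j n : ℤ) : ℝ)) * (x⁻¹ ^ j).re / (j : ℝ)| := le_abs_self _
        _ = |((cR j n : ℤ) : ℝ)| * |(x⁻¹ ^ j).re| / (j : ℝ) := by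
            rw [abs_div, abs_mul, abs_neg, Nat.abs_cast]
        _ ≤ (g : ℝ) * r ^ j / j := by
            have h1 : |((cR j n : ℤ) : ℝ)| ≤ (g : ℝ) := by exact_mod_cast hg
            gcongr
            exact habsre j
    have hle : ∀ j : ℕ, ∑ p ∈ A, F p j ≤ geo j := by
      intro j
      rcases eq_or_ne j 0 with rfl | hj
      · rw [hcRcast 0]
        simp [hgeo]
      · have hj1 : 1 ≤ j := Nat.one_le_iff_ne_zero.mpr hj
        have h1 : (∑ p ∈ A, F p j) ≤ (j : ℝ) * r ^ j / j := by
          refine hbound j hj1 j ((abs_cR_le j n).trans ?_) le_rfl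
          exact_mod_cast Nat.le_of_dvd hj1 (Nat.gcd_dvd_right n j)
        rw [hgeo]
        simp only [hj, if_false]
        calc (∑ p ∈ A, F p j) ≤ (j : ℝ) * r ^ j / j := h1
          _ = r ^ j := by
            rw [mul_comm, mul_div_assoc, div_self (by positivity : (j:ℝ) ≠ 0), mul_one]
    have hstrict : ∑ p ∈ A, F p (n + 1) < geo (n + 1) := by
      have hgcd : Nat.gcd n (n + 1) = 1 := Nat.succ_sub_one (n+1) ▸ by
        simpa using Nat.coprime_succ_self_right (n := n)
      have h1 : (∑ p ∈ A, F p (n + 1)) ≤ ((1:ℕ) : ℝ) * r ^ (n+1) / ((n+1 : ℕ) : ℝ) :=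
        hbound (n+1) (by omega) 1 ((abs_cR_le (n+1) n).trans_eq (by rw [hgcd]))
          (by
            have : (1:ℝ) ≤ ((n+1 : ℕ) : ℝ) := by exact_mod_cast (by omega : 1 ≤ n + 1)
            simpa using this)
      have h2 : ((1:ℕ) : ℝ) * r ^ (n+1) / ((n+1 : ℕ) : ℝ) < r ^ (n+1) := by
        rw [Nat.cast_one, one_mul]
        refine div_lt_self (by positivity) ?_
        have : (1:ℝ) < ((n+1 : ℕ) : ℝ) := by exact_mod_cast (by omega : 1 < n + 1)
        exact this
      have h3 : geo (n + 1) = r ^ (n + 1) := by simp [hgeo]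
      rw [h3]
      exact lt_of_le_of_lt h1 h2
    calc T = ∑' j, (∑ p ∈ A, F p j) := HT.tsum_eq.symm
      _ < ∑' j, geo j := Summable.tsum_lt_tsum hle hstrict HT.summable Hgeo.summable
      _ = (‖x‖ - 1)⁻¹ := Hgeo.tsum_eq
  linarith


end AbsCyclotomicAux

/-- For `n > 1`, real `R > 1` and complex `x` with `|x| ≥ R`,
`|Φ_n(x)| < R^{φ(n)} · exp(1/(R−1)) · (|x|/R)^{φ(n)}`; in particular if `|x| = R`
then `|Φ_n(x)| < R^{φ(n)} exp(1/(R−1))`. -/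
theorem abs_cyclotomic_lt (n : ℕ) (hn : 1 < n) (R : ℝ) (hR : 1 < R) (x : ℂ)
    (hx : R ≤ ‖x‖) :
    ‖(cyclotomic n ℂ).eval x‖ <
        R ^ n.totient * Real.exp (1 / (R - 1)) * (‖x‖ / R) ^ n.totient ∧
      (‖x‖ = R →
        ‖(cyclotomic n ℂ).eval x‖ <
          R ^ n.totient * Real.exp (1 / (R - 1))) := by
  have hx1 : 1 < ‖x‖ := lt_of_lt_of_le hR hx
  have ha0 : (0:ℝ) < ‖x‖ := by linarith
  have hkey := AbsCyclotomicAux.key n hn x hx1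
  have hmono : (‖x‖ - 1)⁻¹ ≤ (R - 1)⁻¹ := by
    apply inv_anti₀ (by linarith) (by linarith)
  have hlt : Real.log (‖(cyclotomic n ℂ).eval x‖) <
      n.totient * Real.log (‖x‖) + (R - 1)⁻¹ := by linarith
  have hpos : 0 < ‖(cyclotomic n ℂ).eval x‖ :=
    (norm_nonneg _).lt_of_ne
      (Ne.symm (norm_ne_zero_iff.mpr (AbsCyclotomicAux.cyclotomic_eval_ne_zero n (by omega) x hx1)))
  have hmain : ‖(cyclotomic n ℂ).eval x‖ <
      R ^ n.totient * Real.exp (1 / (R - 1)) * (‖x‖ / R) ^ n.totient := by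
    have hR0 : (0:ℝ) < R := by linarith
    have e3 : R ^ n.totient * Real.exp (1 / (R - 1)) * (‖x‖ / R) ^ n.totient
        = ‖x‖ ^ n.totient * Real.exp ((R - 1)⁻¹) := by
      rw [div_pow, one_div]
      field_simp
    calc ‖(cyclotomic n ℂ).eval x‖
        = Real.exp (Real.log (‖(cyclotomic n ℂ).eval x‖)) :=
          (Real.exp_log hpos).symm
      _ < Real.exp (n.totient * Real.log (‖x‖) + (R - 1)⁻¹) :=
          Real.exp_lt_exp.mpr hlt
      _ = ‖x‖ ^ n.totient * Real.exp ((R - 1)⁻¹) := by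
          rw [Real.exp_add, Real.exp_nat_mul, Real.exp_log ha0]
      _ = R ^ n.totient * Real.exp (1 / (R - 1)) * (‖x‖ / R) ^ n.totient := e3.symm
  refine ⟨hmain, fun habs => ?_⟩
  rw [habs] at hmain
  rwa [div_self (by linarith : R ≠ 0), one_pow, mul_one] at hmain
end
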